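/- arXiv:1704.04177 — 3 statements merged into one kernel-verified Lean document; each statement's English description precedes it below -/
import Mathlib

section
/- Let X be a standard Borel space, let d₁, d₂, d₃ : X × X → ℝ be Borel measurable, let p and p' be Markov kernels from X to X, and let q and q' be Markov kernels from X×X to X×X. Assume: (a) for every (x,y) ∈ X×X, the first and second marginals of q((x,y),·) are p(x,·) and p(y,·) respectively, and d₂(x',y') ≤ d₁(x,y) for q((x,y),·)-almost every (x',y'); (b) for every (x,y) ∈ X×X, the first and second marginals of q'((x,y),·) are p'(x,·) and p'(y,·) respectively, and d₃(x'',y'') ≤ d₂(x,y) for q'((x,y),·)-almost every (x'',y''). Let q'' be the composed kernel q''((x,y),A) = ∫_{X×X} q'((x',y'),A) q((x,y),d(x',y')), and let p'' be the composed kernel p''(x,A) = ∫_X p'(x',A) p(x,dx'). Then for every (x,y) ∈ X×X the first and second marginals of q''((x,y),·) are p''(x,·) and p''(y,·) respectively, and d₃(x'',y'') ≤ d₁(x,y) for q''((x,y),·)-almost every (x'',y''). -/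
open MeasureTheory ProbabilityTheory


open MeasureTheory in
lemma measure_map_bind' {α β γ : Type*} [MeasurableSpace α] [MeasurableSpace β]
    [MeasurableSpace γ] (μ : Measure α) (κ : α → Measure β) (hκ : Measurable κ)
    {f : β → γ} (hf : Measurable f) :
    (μ.bind κ).map f = μ.bind (fun a => (κ a).map f) := by
  have hm : Measurable fun a => (κ a).map f := (Measure.measurable_map f hf).comp hκ
  ext s hs
  rw [Measure.map_apply hf hs, Measure.bind_apply (hf hs) hκ.aemeasurable, Measure.bind_apply hs hm.aemeasurable]
  simp_rw [Measure.map_apply hf hs]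

open MeasureTheory in
lemma measure_bind_map' {α β γ : Type*} [MeasurableSpace α] [MeasurableSpace β]
    [MeasurableSpace γ] (μ : Measure α) {g : α → β} (hg : Measurable g)
    (κ : β → Measure γ) (hκ : Measurable κ) :
    (μ.map g).bind κ = μ.bind (fun a => κ (g a)) := by
  ext s hs
  have hm : Measurable fun b => (κ b) s := (Measure.measurable_coe hs).comp hκ
  rw [Measure.bind_apply hs hκ.aemeasurable, MeasureTheory.lintegral_map hm hg,
    Measure.bind_apply hs (show Measurable fun a => κ (g a) from hκ.comp hg).aemeasurable]

/-- **Composition of contracting coupling kernels.**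
Let `X` be a standard Borel space, `d₁, d₂, d₃ : X × X → ℝ` Borel measurable, `p, p'`
Markov kernels from `X` to `X`, and `q, q'` Markov kernels from `X×X` to `X×X`.
Assume `q((x,y),·)` couples `p(x,·)` and `p(y,·)` with `d₂ ≤ d₁(x,y)` almost everywhere,
and `q'((x,y),·)` couples `p'(x,·)` and `p'(y,·)` with `d₃ ≤ d₂(x,y)` almost everywhere.
Then the composed kernel `q''((x,y),·) = ∫ q'((x',y'),·) q((x,y),d(x',y'))` couples the
composed kernel `p''(x,·) = ∫ p'(x',·) p(x,dx')` at `x` and at `y`, and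
`d₃(x'',y'') ≤ d₁(x,y)` for `q''((x,y),·)`-almost every `(x'',y'')`. -/

theorem coupling_kernel_composition
    {X : Type*} [MeasurableSpace X] [StandardBorelSpace X]
    (d₁ d₂ d₃ : X → X → ℝ)
    (hd₁ : Measurable fun z : X × X => d₁ z.1 z.2)
    (hd₂ : Measurable fun z : X × X => d₂ z.1 z.2)
    (hd₃ : Measurable fun z : X × X => d₃ z.1 z.2)
    (p p' : Kernel X X) (hp : IsMarkovKernel p) (hp' : IsMarkovKernel p')
    (q q' : Kernel (X × X) (X × X)) (hq : IsMarkovKernel q) (hq' : IsMarkovKernel q')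
    (hcoup : ∀ x y : X,
      (q (x, y)).map Prod.fst = p x ∧ (q (x, y)).map Prod.snd = p y ∧
      ∀ᵐ z ∂(q (x, y)), d₂ z.1 z.2 ≤ d₁ x y)
    (hcoup' : ∀ x y : X,
      (q' (x, y)).map Prod.fst = p' x ∧ (q' (x, y)).map Prod.snd = p' y ∧
      ∀ᵐ z ∂(q' (x, y)), d₃ z.1 z.2 ≤ d₂ x y) :
    ∀ x y : X,
      ((q (x, y)).bind fun z => q' z).map Prod.fst = (p x).bind (fun x' => p' x') ∧
      ((q (x, y)).bind fun z => q' z).map Prod.snd = (p y).bind (fun y' => p' y') ∧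
      ∀ᵐ z ∂((q (x, y)).bind fun z => q' z), d₃ z.1 z.2 ≤ d₁ x y := by

  intro x y
  obtain ⟨h1, h2, h3⟩ := hcoup x y
  have hmfst : Measurable fun z : X × X => (q' z).map Prod.fst :=
    (Measure.measurable_map _ measurable_fst).comp q'.measurable
  have hmsnd : Measurable fun z : X × X => (q' z).map Prod.snd :=
    (Measure.measurable_map _ measurable_snd).comp q'.measurable
  refine ⟨?_, ?_, ?_⟩
  · rw [measure_map_bind' _ _ q'.measurable measurable_fst]
    have : (fun z : X × X => (q' z).map Prod.fst) = fun z => p' z.1 := by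
      funext z; exact (hcoup' z.1 z.2).1
    rw [this, ← h1, measure_bind_map' _ measurable_fst _ p'.measurable]
  · rw [measure_map_bind' _ _ q'.measurable measurable_snd]
    have : (fun z : X × X => (q' z).map Prod.snd) = fun z => p' z.2 := by
      funext z; exact (hcoup' z.1 z.2).2.1
    rw [this, ← h2, measure_bind_map' _ measurable_snd _ p'.measurable]
  · have hs : MeasurableSet {z : X × X | ¬ d₃ z.1 z.2 ≤ d₁ x y} :=
      (measurableSet_le hd₃ measurable_const).compl
    rw [ae_iff, Measure.bind_apply hs q'.measurable.aemeasurable]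
    refine lintegral_eq_zero_iff (q'.measurable_coe hs) |>.2 ?_
    filter_upwards [h3] with z hz
    obtain ⟨-, -, h3'⟩ := hcoup' z.1 z.2
    have : (q' z) {w : X × X | ¬ d₃ w.1 w.2 ≤ d₁ x y} = 0 := by
      rw [← ae_iff] at *
      filter_upwards [h3'] with w hw
      exact hw.trans hz
    exact this
end

section
/- Let X be a set, let I = (0,T) for some T > 0, and let (d_t)_{t∈I} be a family of metrics on X, all inducing the same topology. Assume there are a constant C > 0 and a function h : I × X × X → ℝ with |h_r(x,y)| ≤ C for all r, x, y, such that r ↦ h_r(x,y) is continuous for all x, y, such that d_t(x,y) = d_s(x,y)·exp(∫_s^t h_r(x,y) dr) for all s, t ∈ I and all x, y ∈ X, and such that for every x ∈ X and every r ∈ I the limit H_r(x) := lim_{y→x} h_r(x,y) exists. Then for every function u : X → ℝ that is Lipschitz with respect to one (equivalently, every) metric d_t, every non-isolated point x ∈ X and all s, t ∈ I: lip_t u(x) = lip_s u(x)·exp(−∫_s^t H_r(x) dr). -/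
open Filter Topology intervalIntegral

/-- `ρ` is a metric on `X` inducing the ambient topology: it is nonnegative, symmetric,
vanishes exactly on the diagonal, satisfies the triangle inequality, its balls are
neighbourhoods, and every neighbourhood contains a ball. -/
def IsCompatibleMetric {X : Type*} [TopologicalSpace X] (ρ : X → X → ℝ) : Prop :=
  (∀ x y, 0 ≤ ρ x y) ∧ (∀ x y, ρ x y = ρ y x) ∧ (∀ x y, ρ x y = 0 ↔ x = y) ∧
  (∀ x y z, ρ x z ≤ ρ x y + ρ y z) ∧
  (∀ x : X, ∀ ε : ℝ, 0 < ε → {y | ρ x y < ε} ∈ nhds x) ∧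
  (∀ x : X, ∀ U ∈ nhds x, ∃ ε : ℝ, 0 < ε ∧ {y | ρ x y < ε} ⊆ U)

/-- The local Lipschitz slope of `u` at `x` with respect to the distance function `ρ`:
`limsup_{y→x, y≠x} |u(y)−u(x)|/ρ(x,y)`. -/
noncomputable def localSlope {X : Type*} [TopologicalSpace X]
    (ρ : X → X → ℝ) (u : X → ℝ) (x : X) : ℝ :=
  Filter.limsup (fun y => |u y - u x| / ρ x y) (nhdsWithin x {x}ᶜ)

/-- If `g → E ≥ 0`, `0 ≤ f ≤ M` eventually and `g ≥ 0` eventually, then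
`limsup (f·g) ≤ E · limsup f`. -/
lemma limsup_mul_le_of_tendsto {α : Type*} {l : Filter α} [l.NeBot] {f g : α → ℝ} {E M : ℝ}
    (hg : Tendsto g l (𝓝 E)) (hE : 0 ≤ E)
    (hf0 : ∀ᶠ y in l, 0 ≤ f y) (hfM : ∀ᶠ y in l, f y ≤ M)
    (hg0 : ∀ᶠ y in l, 0 ≤ g y) :
    limsup (fun y => f y * g y) l ≤ E * limsup f l := by
  set L := limsup f l with hL
  have hbddf : IsBoundedUnder (· ≤ ·) l f := isBoundedUnder_of_eventually_le hfM
  have hcobf : IsCoboundedUnder (· ≤ ·) l f :=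
    isCoboundedUnder_le_of_eventually_le l hf0
  have hL0 : (0 : ℝ) ≤ L := le_limsup_of_frequently_le hf0.frequently hbddf
  have key : ∀ ε : ℝ, 0 < ε → limsup (fun y => f y * g y) l ≤ (E + ε) * L := by
    intro ε hε
    have hgle : ∀ᶠ y in l, g y ≤ E + ε :=
      hg.eventually_le_const (lt_add_of_pos_right E hε)
    have hev : ∀ᶠ y in l, f y * g y ≤ (E + ε) * f y := by
      filter_upwards [hgle, hf0] with y h1 h2
      calc f y * g y ≤ f y * (E + ε) := mul_le_mul_of_nonneg_left h1 h2
        _ = (E + ε) * f y := mul_comm _ _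
    have hmono : Monotone fun z : ℝ => (E + ε) * z := fun a b hab =>
      mul_le_mul_of_nonneg_left hab (by positivity)
    have hmap : (E + ε) * L = limsup (fun y => (E + ε) * f y) l := by
      have := hmono.map_limsup_of_continuousAt (F := l) f
        ((continuous_const.mul continuous_id).continuousAt) hbddf hcobf
      exact this
    rw [hmap]
    refine limsup_le_limsup hev ?_ ?_
    · refine isCoboundedUnder_le_of_eventually_le (x := (0:ℝ)) l ?_
      filter_upwards [hf0, hg0] with y h1 h2
      exact mul_nonneg h1 h2
    · refine isBoundedUnder_of_eventually_le (a := (E + ε) * M) ?_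
      filter_upwards [hfM] with y h1
      exact mul_le_mul_of_nonneg_left h1 (by positivity)
  refine le_of_forall_pos_le_add fun ε hε => ?_
  have hε' : 0 < ε / (L + 1) := by positivity
  calc limsup (fun y => f y * g y) l ≤ (E + ε / (L + 1)) * L := key _ hε'
    _ = E * L + (ε / (L + 1)) * L := by ring
    _ ≤ E * L + ε := by
        have : (ε / (L + 1)) * L ≤ ε := by
          rw [div_mul_eq_mul_div, div_le_iff₀ (by linarith)]
          nlinarith
        linarith

/-- If `g → E > 0`, `0 ≤ f ≤ M` eventually and `g > 0` eventually, then
`limsup (f·g) = E · limsup f`. -/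
lemma limsup_mul_eq_of_tendsto {α : Type*} {l : Filter α} [l.NeBot] {f g : α → ℝ} {E M : ℝ}
    (hg : Tendsto g l (𝓝 E)) (hE : 0 < E)
    (hf0 : ∀ᶠ y in l, 0 ≤ f y) (hfM : ∀ᶠ y in l, f y ≤ M)
    (hg0 : ∀ᶠ y in l, 0 < g y) :
    limsup (fun y => f y * g y) l = E * limsup f l := by
  have hle := limsup_mul_le_of_tendsto hg hE.le hf0 hfM (hg0.mono fun y hy => hy.le)
  have hgM : ∀ᶠ y in l, g y ≤ E + 1 := hg.eventually_le_const (lt_add_of_pos_right E one_pos)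
  have hfg0 : ∀ᶠ y in l, 0 ≤ f y * g y := by
    filter_upwards [hf0, hg0] with y h1 h2; exact mul_nonneg h1 h2.le
  have hfgM : ∀ᶠ y in l, f y * g y ≤ M * (E + 1) := by
    filter_upwards [hf0, hfM, hg0, hgM] with y h1 h2 h3 h4
    calc f y * g y ≤ f y * (E + 1) := mul_le_mul_of_nonneg_left h4 h1
      _ ≤ M * (E + 1) := mul_le_mul_of_nonneg_right h2 (by positivity)
  have hginv : Tendsto (fun y => (g y)⁻¹) l (𝓝 E⁻¹) := hg.inv₀ hE.ne'
  have hkey := limsup_mul_le_of_tendsto (f := fun y => f y * g y) hginv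
    (inv_nonneg.mpr hE.le) hfg0 hfgM
    (hg0.mono fun y hy => (inv_nonneg.mpr hy.le))
  have hcongr : limsup (fun y => (f y * g y) * (g y)⁻¹) l = limsup f l := by
    refine limsup_congr ?_
    filter_upwards [hg0] with y hy
    field_simp
  rw [hcongr] at hkey
  refine le_antisymm hle ?_
  have := mul_le_mul_of_nonneg_left hkey hE.le
  rw [← mul_assoc, mul_inv_cancel₀ hE.ne', one_mul] at this
  exact this

/-- **Behaviour of local slopes along a time-dependent family of metrics.**
Let `X` carry a family of metrics `(d_t)_{t∈(0,T)}`, all inducing the ambient topology.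
Assume `|h_r(x,y)| ≤ C`, `r ↦ h_r(x,y)` is continuous, the metrics satisfy
`d_t(x,y) = d_s(x,y)·exp(∫_s^t h_r(x,y) dr)`, and for every `x` and `r` the limit
`H_r(x) = lim_{y→x} h_r(x,y)` exists. Then for every function `u` that is Lipschitz with
respect to one of the metrics `d_{t₀}`, every non-isolated point `x` and all
`s, t ∈ (0,T)`: `lip_t u(x) = lip_s u(x)·exp(−∫_s^t H_r(x) dr)`. -/
theorem localSlope_eq_of_time_dependent_metrics
    {X : Type*} [TopologicalSpace X]
    (T : ℝ) (hT : 0 < T)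
    (d : ℝ → X → X → ℝ)
    (hd : ∀ t ∈ Set.Ioo (0 : ℝ) T, IsCompatibleMetric (d t))
    (C : ℝ) (hC : 0 < C)
    (h : ℝ → X → X → ℝ)
    (hbound : ∀ r ∈ Set.Ioo (0 : ℝ) T, ∀ x y : X, |h r x y| ≤ C)
    (hcont : ∀ x y : X, ContinuousOn (fun r => h r x y) (Set.Ioo (0 : ℝ) T))
    (hformula : ∀ s ∈ Set.Ioo (0 : ℝ) T, ∀ t ∈ Set.Ioo (0 : ℝ) T, ∀ x y : X,
      d t x y = d s x y * Real.exp (∫ r in s..t, h r x y))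
    (H : ℝ → X → ℝ)
    (hH : ∀ x : X, ∀ r ∈ Set.Ioo (0 : ℝ) T,
      Tendsto (fun y => h r x y) (nhdsWithin x {x}ᶜ) (𝓝 (H r x)))
    (u : X → ℝ)
    (hu : ∃ t₀ ∈ Set.Ioo (0 : ℝ) T, ∃ K : ℝ, 0 ≤ K ∧
      ∀ x y : X, |u x - u y| ≤ K * d t₀ x y)
    (x : X) (hx : (nhdsWithin x {x}ᶜ).NeBot)
    (s : ℝ) (hs : s ∈ Set.Ioo (0 : ℝ) T)
    (t : ℝ) (htI : t ∈ Set.Ioo (0 : ℝ) T) :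
    localSlope (d t) u x = localSlope (d s) u x * Real.exp (-∫ r in s..t, H r x) := by
  obtain ⟨t₀, ht₀, K, hK, hLip⟩ := hu
  obtain ⟨hnn, hsymm, hzero, htri, hball, hnbhd⟩ := hd s hs
  set l := nhdsWithin x {x}ᶜ with hl
  -- the filter is countably generated
  have hcg : (nhds x).IsCountablyGenerated := by
    have hb : (nhds x).HasBasis (fun _ : ℕ => True)
        (fun n => {y | d s x y < 1 / (n + 1)}) := by
      constructor
      intro U
      simp only [true_and]
      constructor
      · intro hU
        obtain ⟨ε, hε, hsub⟩ := hnbhd x U hU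
        obtain ⟨n, hn⟩ := exists_nat_one_div_lt hε
        exact ⟨n, fun y hy => hsub (lt_trans hy hn)⟩
      · rintro ⟨n, hsub⟩
        exact Filter.mem_of_superset (hball x _ (by positivity)) hsub
    exact hb.isCountablyGenerated
  haveI : IsCountablyGenerated l :=
    show IsCountablyGenerated (nhds x ⊓ Filter.principal {x}ᶜ) from
      @Filter.Inf.isCountablyGenerated _ _ _ hcg _
  haveI : l.NeBot := hx
  -- interval inclusions
  have hIoc : Set.uIoc s t ⊆ Set.Ioo (0 : ℝ) T := by
    intro r hr
    exact ⟨lt_of_lt_of_le (lt_min hs.1 htI.1) hr.1.le,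
      lt_of_le_of_lt hr.2 (max_lt hs.2 htI.2)⟩
  have hIoc0 : Set.uIoc s t₀ ⊆ Set.Ioo (0 : ℝ) T := by
    intro r hr
    exact ⟨lt_of_lt_of_le (lt_min hs.1 ht₀.1) hr.1.le,
      lt_of_le_of_lt hr.2 (max_lt hs.2 ht₀.2)⟩
  -- convergence of the integrals by dominated convergence
  have hint : Tendsto (fun y => ∫ r in s..t, h r x y) l (𝓝 (∫ r in s..t, H r x)) := by
    apply intervalIntegral.tendsto_integral_filter_of_dominated_convergence
      (bound := fun _ => C)
    · exact Eventually.of_forall fun y =>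
        ((hcont x y).mono hIoc).aestronglyMeasurable measurableSet_uIoc
    · exact Eventually.of_forall fun y => MeasureTheory.ae_of_all _ fun r hr => by
        simpa [Real.norm_eq_abs] using hbound r (hIoc hr) x y
    · exact intervalIntegrable_const
    · exact MeasureTheory.ae_of_all _ fun r hr => hH x r (hIoc hr)
  set E := Real.exp (-∫ r in s..t, H r x) with hE
  have hgE : Tendsto (fun y => Real.exp (-∫ r in s..t, h r x y)) l (𝓝 E) :=
    (Real.continuous_exp.continuousAt.tendsto).comp hint.neg
  -- the quotient for d t equals the quotient for d s times the exponential factor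
  have hquot : ∀ y : X, |u y - u x| / d t x y =
      (|u y - u x| / d s x y) * Real.exp (-∫ r in s..t, h r x y) := by
    intro y
    rw [hformula s hs t htI x y, div_mul_eq_div_div, div_eq_mul_inv, Real.exp_neg]
  -- boundedness of the quotient for d s
  set M := K * Real.exp (C * |t₀ - s|) with hM
  have hfM : ∀ᶠ y in l, |u y - u x| / d s x y ≤ M := by
    filter_upwards [self_mem_nhdsWithin] with y hy
    have hyx : y ≠ x := hy
    have hdne : d s x y ≠ 0 := fun h0 => hyx ((hzero x y).mp h0).symm
    have hdpos : 0 < d s x y := lt_of_le_of_ne (hnn x y) (Ne.symm hdne)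
    have hIb : |∫ r in s..t₀, h r x y| ≤ C * |t₀ - s| := by
      have := intervalIntegral.norm_integral_le_of_norm_le_const (C := C)
        (f := fun r => h r x y) (a := s) (b := t₀)
        (fun r hr => by simpa [Real.norm_eq_abs] using hbound r (hIoc0 hr) x y)
      simpa [Real.norm_eq_abs] using this
    have hexp : Real.exp (∫ r in s..t₀, h r x y) ≤ Real.exp (C * |t₀ - s|) :=
      Real.exp_le_exp.mpr (le_trans (le_abs_self _) hIb)
    have hub : |u y - u x| ≤ M * d s x y := by
      calc |u y - u x| ≤ K * d t₀ y x := hLip y x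
        _ = K * d t₀ x y := by rw [(hd t₀ ht₀).2.1 y x]
        _ = K * (d s x y * Real.exp (∫ r in s..t₀, h r x y)) := by
            rw [hformula s hs t₀ ht₀ x y]
        _ ≤ K * (d s x y * Real.exp (C * |t₀ - s|)) := by
            apply mul_le_mul_of_nonneg_left _ hK
            exact mul_le_mul_of_nonneg_left hexp (hnn x y)
        _ = M * d s x y := by ring
    exact (div_le_iff₀ hdpos).mpr hub
  have hf0 : ∀ᶠ y in l, 0 ≤ |u y - u x| / d s x y :=
    Eventually.of_forall fun y => div_nonneg (abs_nonneg _) (hnn x y)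
  have hg0 : ∀ᶠ y in l, 0 < Real.exp (-∫ r in s..t, h r x y) :=
    Eventually.of_forall fun y => Real.exp_pos _
  have hmain := limsup_mul_eq_of_tendsto hgE (Real.exp_pos _) hf0 hfM hg0
  have hfinal : localSlope (d t) u x = limsup (fun y =>
      (|u y - u x| / d s x y) * Real.exp (-∫ r in s..t, h r x y)) l := by
    unfold localSlope
    exact limsup_congr (Eventually.of_forall fun y => hquot y)
  rw [hfinal, hmain, mul_comm]
  rfl
end

section
/- Let Y be a metric space, let f : Y → [0,∞) be continuous, let D ≥ 0, let (p_k) be a sequence in [1,∞) with p_k → ∞, and let (γ_k) be Borel probability measures on Y converging weakly to a Borel probability measure γ, such that (∫_Y f^{p_k} dγ_k)^{1/p_k} ≤ D for every k. Then f(z) ≤ D for γ-almost every z ∈ Y. -/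
open MeasureTheory Filter Topology ENNReal

/-- **Lower semicontinuity of the essential supremum bound along weak limits.**
Let `Y` be a metric space, `f : Y → [0,∞)` continuous, `D ≥ 0`, `(p_k)` a sequence in
`[1,∞)` with `p_k → ∞`, and `(γ_k)` Borel probability measures on `Y` converging weakly
to a Borel probability measure `γ`, such that `(∫_Y f^{p_k} dγ_k)^{1/p_k} ≤ D` for every
`k`. Then `f(z) ≤ D` for `γ`-almost every `z ∈ Y`. -/
theorem ae_le_of_weak_limit_of_Lp_bounds
    {Y : Type*} [MetricSpace Y] [MeasurableSpace Y] [BorelSpace Y]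
    (f : Y → ℝ) (hf_cont : Continuous f) (hf_nonneg : ∀ z, 0 ≤ f z)
    (D : ℝ) (hD : 0 ≤ D)
    (p : ℕ → ℝ) (hp_one : ∀ k, 1 ≤ p k) (hp_top : Tendsto p atTop atTop)
    (γseq : ℕ → Measure Y) (γ : Measure Y)
    (hprob : ∀ k, IsProbabilityMeasure (γseq k)) (hγprob : IsProbabilityMeasure γ)
    (hweak : ∀ g : BoundedContinuousFunction Y ℝ,
      Tendsto (fun k => ∫ z, g z ∂(γseq k)) atTop (𝓝 (∫ z, g z ∂γ)))
    (hbound : ∀ k, (∫⁻ z, ENNReal.ofReal (f z) ^ (p k) ∂(γseq k)) ^ (1 / p k)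
      ≤ ENNReal.ofReal D) :
    ∀ᵐ z ∂γ, f z ≤ D := by
  have key : ∀ ε : ℝ, 0 < ε → ∀ᵐ z ∂γ, f z ≤ D + ε := by
    intro ε hε
    set c : ℝ := D + ε with hc_def
    have hc : 0 < c := by positivity
    have hDc : D / c < 1 := (div_lt_one hc).2 (by linarith)
    have hDc0 : 0 ≤ D / c := div_nonneg hD hc.le
    set S : Set Y := {z | c ≤ f z} with hS_def
    have hS_meas : MeasurableSet S := (isClosed_le continuous_const hf_cont).measurableSet
    -- Chebyshev bound on γseq k S
    have cheb : ∀ k, γseq k S ≤ ENNReal.ofReal ((D / c) ^ (p k)) := by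
      intro k
      have ppos : (0 : ℝ) < p k := lt_of_lt_of_le one_pos (hp_one k)
      have h1 : ∫⁻ z, ENNReal.ofReal (f z) ^ (p k) ∂(γseq k) ≤ ENNReal.ofReal D ^ (p k) := by
        have h := ENNReal.rpow_le_rpow (hbound k) ppos.le
        rwa [← ENNReal.rpow_mul, one_div, inv_mul_cancel₀ ppos.ne', ENNReal.rpow_one] at h
      have hmeas : AEMeasurable (fun z => ENNReal.ofReal (f z) ^ (p k)) (γseq k) :=
        (ENNReal.continuous_rpow_const.comp
          (ENNReal.continuous_ofReal.comp hf_cont)).measurable.aemeasurable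
      have h2 := mul_meas_ge_le_lintegral₀ hmeas (ENNReal.ofReal c ^ (p k))
      have hsub : S ⊆ {z | ENNReal.ofReal c ^ (p k) ≤ ENNReal.ofReal (f z) ^ (p k)} := by
        intro z hz
        exact ENNReal.rpow_le_rpow (ENNReal.ofReal_le_ofReal hz) ppos.le
      have h3 : ENNReal.ofReal c ^ (p k) * γseq k S ≤ ENNReal.ofReal D ^ (p k) := by
        refine le_trans ?_ (le_trans h2 h1)
        exact mul_le_mul_right (measure_mono hsub) _
      have hcne : ENNReal.ofReal c ^ (p k) ≠ 0 := by
        simp [ENNReal.rpow_eq_zero_iff, ENNReal.ofReal_eq_zero, not_le, hc, ppos,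
          ENNReal.ofReal_ne_top]
      have hcnt : ENNReal.ofReal c ^ (p k) ≠ ∞ := by
        simp [ENNReal.rpow_eq_top_iff, ENNReal.ofReal_eq_zero, not_le, hc,
          ENNReal.ofReal_ne_top]
      have h4 : γseq k S ≤ ENNReal.ofReal D ^ (p k) / ENNReal.ofReal c ^ (p k) :=
        (ENNReal.le_div_iff_mul_le (Or.inl hcne) (Or.inl hcnt)).2 (by rwa [mul_comm] at h3)
      calc γseq k S ≤ ENNReal.ofReal D ^ (p k) / ENNReal.ofReal c ^ (p k) := h4
        _ = ENNReal.ofReal ((D / c) ^ (p k)) := by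
            rw [← ENNReal.ofReal_rpow_of_nonneg hDc0 ppos.le, ENNReal.ofReal_div_of_pos hc,
              ENNReal.div_rpow_of_nonneg _ _ ppos.le]
    -- the test function
    set gf : Y → ℝ := fun z => min 1 (max 0 ((f z - c) / ε)) with hgf_def
    have hg_cont : Continuous gf :=
      continuous_const.min (continuous_const.max ((hf_cont.sub continuous_const).div_const ε))
    have hg0 : ∀ z, 0 ≤ gf z := fun z => le_min zero_le_one (le_max_left _ _)
    have hg1 : ∀ z, gf z ≤ 1 := fun z => min_le_left _ _
    set g : BoundedContinuousFunction Y ℝ :=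
      BoundedContinuousFunction.ofNormedAddCommGroup gf hg_cont 1 (fun z => by
        rw [Real.norm_eq_abs, abs_le]; exact ⟨by linarith [hg0 z], hg1 z⟩) with hg_def
    have hg_coe : ∀ z, g z = gf z := fun z => rfl
    -- bound on ∫ g dγseq k
    have hbk : ∀ k, ∫ z, g z ∂(γseq k) ≤ (D / c) ^ (p k) := by
      intro k
      have := hprob k
      have hint_ind : Integrable (S.indicator (fun _ => (1 : ℝ))) (γseq k) :=
        (integrable_const 1).indicator hS_meas
      have hle : ∀ z, g z ≤ S.indicator (fun _ => (1 : ℝ)) z := by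
        intro z
        rw [hg_coe]
        by_cases hz : z ∈ S
        · rw [Set.indicator_of_mem hz]; exact hg1 z
        · rw [Set.indicator_of_notMem hz]
          have hfz : f z < c := lt_of_not_ge hz
          have : (f z - c) / ε ≤ 0 := div_nonpos_of_nonpos_of_nonneg (by linarith) hε.le
          simp [hgf_def, max_eq_left this]
      calc ∫ z, g z ∂(γseq k) ≤ ∫ z, S.indicator (fun _ => (1 : ℝ)) z ∂(γseq k) :=
            integral_mono (g.integrable _) hint_ind hle
        _ = (γseq k S).toReal := by
            rw [integral_indicator_const _ hS_meas]; simp [Measure.real]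
        _ ≤ (D / c) ^ (p k) := by
            have h := ENNReal.toReal_mono ENNReal.ofReal_ne_top (cheb k)
            rwa [ENNReal.toReal_ofReal (Real.rpow_nonneg hDc0 _)] at h
    have hb0 : Tendsto (fun k => (D / c) ^ (p k)) atTop (𝓝 0) :=
      (tendsto_rpow_atTop_of_base_lt_one (D / c) (by linarith) hDc).comp hp_top
    have h_int_le : ∫ z, g z ∂γ ≤ 0 :=
      le_of_tendsto_of_tendsto' (hweak g) hb0 hbk
    have h_int_eq : ∫ z, g z ∂γ = 0 :=
      le_antisymm h_int_le (integral_nonneg fun z => hg0 z)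
    have hg_ae : ∀ᵐ z ∂γ, g z = 0 :=
      (integral_eq_zero_iff_of_nonneg (fun z => hg0 z) (g.integrable γ)).1 h_int_eq
    filter_upwards [hg_ae] with z hz
    by_contra h
    push_neg at h
    have ht : 0 < (f z - c) / ε := div_pos (by linarith) hε
    have : 0 < gf z := lt_min one_pos (lt_max_of_lt_right ht)
    rw [hg_coe] at hz
    linarith
  have hall : ∀ᵐ z ∂γ, ∀ n : ℕ, f z ≤ D + 1 / (n + 1) :=
    ae_all_iff.2 fun n => key (1 / (n + 1)) (by positivity)
  filter_upwards [hall] with z hz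
  by_contra h
  push_neg at h
  obtain ⟨n, hn⟩ := exists_nat_one_div_lt (sub_pos.2 h)
  have := hz n
  linarith
end
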